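/- Let G be a module over Z_p (the integers localized at a prime p), X a decomposition basis for G, and S a finitely generated submodule of G such that S ∩ ⟨X⟩ = ⟨S ∩ X⟩. Then for every y ∈ X with y ∉ S, there is an n ∈ ω such that for all r ∈ Z_p and all s ∈ S, |r pⁿ y + s| = min{ |r pⁿ y|, |s| }. -/

import Mathlib

noncomputable section

namespace UlmW

universe u

variable {R : Type*} [CommRing R]

/-- The submodule `p^α M`, defined by transfinite recursion on `α`. -/
def ppow {M : Type u} [AddCommGroup M] [Module R M] (p : R) (α : Ordinal.{u}) :
    Submodule R M :=
  Ordinal.limitRecOn α ⊤ (fun _ S => Submodule.map (LinearMap.lsmul R M p) S)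
    fun β _ ih => ⨅ (γ : Set.Iio β), ih γ.1 γ.2

open scoped Classical in
/-- The `p`-height of `x`, with `⊤` playing the role of `∞`. -/
def pheight {M : Type u} [AddCommGroup M] [Module R M] (p : R) (x : M) :
    WithTop Ordinal.{u} :=
  if h : ∃ α : Ordinal.{u}, x ∈ ppow p α ∧ x ∉ ppow p (α + 1) then (h.choose : WithTop Ordinal)
  else ⊤

/-- `H⁰ = {x : ∃ a ≠ 0, a • x ∈ H}`. -/
def hull {M : Type u} [AddCommGroup M] [Module R M] (H : Submodule R M) : Set M :=
  {x | ∃ a : R, a ≠ 0 ∧ a • x ∈ H}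

/-- `X` is a decomposition set with respect to the single prime `p`. -/
def IsDecompWrt {M : Type u} [AddCommGroup M] [Module R M] (p : R) (X : Set M) : Prop :=
  (LinearIndependent R (fun x : X => (x : M))) ∧
  (∀ x ∈ X, ∀ a : R, a ≠ 0 → a • x ≠ 0) ∧
  (∀ s : Finset M, ↑s ⊆ X → ∀ c : M → R,
    pheight p (∑ x ∈ s, c x • x) = s.inf fun x => pheight p (c x • x))

/-- `X` is a decomposition set (with respect to every prime of `R`). -/
def IsDecompositionSet (R : Type*) [CommRing R] {M : Type u} [AddCommGroup M] [Module R M]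
    (X : Set M) : Prop :=
  ∀ p : R, Prime p → IsDecompWrt p X

/-- partial decomposition basis, heights taken w.r.t. a fixed prime `p`. -/
def IsPDBWrt {M : Type u} [AddCommGroup M] [Module R M] (p : R) (C : Set (Set M)) : Prop :=
  C.Nonempty ∧ (∀ X ∈ C, X.Finite) ∧ (∀ X ∈ C, IsDecompWrt p X) ∧
  ∀ X ∈ C, ∀ x : M, ∃ Y ∈ C, X ⊆ Y ∧ x ∈ hull (Submodule.span R Y)

/-- partial decomposition basis (heights w.r.t. all primes of `R`). -/
def IsPDB (R : Type*) [CommRing R] {M : Type u} [AddCommGroup M] [Module R M] (C : Set (Set M)) : Prop :=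
  C.Nonempty ∧ (∀ X ∈ C, X.Finite) ∧ (∀ X ∈ C, IsDecompositionSet R X) ∧
  ∀ X ∈ C, ∀ x : M, ∃ Y ∈ C, X ⊆ Y ∧ x ∈ hull (Submodule.span R Y)

/-- A partial isomorphism system `I : G ≅_p H`. -/
def IsPartialIsoSystem {M N : Type*} [AddCommGroup M] [Module R M]
    [AddCommGroup N] [Module R N] (I : Set (M →ₗ.[R] N)) : Prop :=
  I.Nonempty ∧
  (∀ f ∈ I, Function.Injective f.toFun) ∧
  (∀ f ∈ I, ∀ a : M, ∃ g ∈ I, f ≤ g ∧ a ∈ g.domain) ∧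
  (∀ f ∈ I, ∀ b : N, ∃ g ∈ I, f ≤ g ∧ ∃ y : g.domain, g y = b)

/-- The Ulm sequence of `x`: `U(x) = (|pⁱ x|)ᵢ`. -/
def UlmSeqOf {M : Type u} [AddCommGroup M] [Module R M] (p : R) (x : M) :
    ℕ → WithTop Ordinal.{u} :=
  fun i => pheight p ((p ^ i) • x)

/-- `u` is an Ulm sequence. -/
def IsUlmSeq (u : ℕ → WithTop Ordinal.{u}) : Prop :=
  ∀ i, (u i = ⊤ → u (i + 1) = ⊤) ∧ (u i ≠ ⊤ → u i < u (i + 1))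

/-- Equivalence of Ulm sequences. -/
def UlmEquiv (u v : ℕ → WithTop Ordinal.{u}) : Prop :=
  ∃ m n : ℕ, ∀ i, u (i + n) = v (i + m)

/-- `X` contains at least `n` elements whose Ulm sequence is equivalent to `u`. -/
def HasAtLeast {M : Type u} [AddCommGroup M] [Module R M] (p : R)
    (u : ℕ → WithTop Ordinal.{u}) (n : ℕ) (X : Set M) : Prop :=
  ∃ s : Finset M, ↑s ⊆ X ∧ n ≤ s.card ∧ ∀ x ∈ s, UlmEquiv (UlmSeqOf p x) u

/-- `ŵ_C(e,G)` where `e` is the class of the Ulm sequence `u`. -/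
def wHat {M : Type u} [AddCommGroup M] [Module R M] (p : R) (C : Set (Set M))
    (u : ℕ → WithTop Ordinal.{u}) : ℕ∞ :=
  sSup {N : ℕ∞ | ∃ n : ℕ, N = (n : ℕ∞) ∧ ∃ X ∈ C, HasAtLeast p u n X}

/-- `x` is proper with respect to `S`. -/
def IsProper {M : Type u} [AddCommGroup M] [Module R M] (p : R) (S : Submodule R M)
    (x : M) : Prop :=
  ∀ s ∈ S, pheight p (x + s) ≤ pheight p x

/-- `H` is a nice submodule. -/
def IsNice {M : Type u} [AddCommGroup M] [Module R M] (p : R) (H : Submodule R M) : Prop :=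
  ∀ x : M, ∃ h ∈ H, ∀ h' ∈ H, pheight p (x + h') ≤ pheight p (x + h)

/-- The Ulm invariant `u_p(σ, M)`: the dimension of `(p^σ M)[p]/(p^{σ+1} M)[p]`
over the residue field `R/(p)`. -/
def uCard (p : R) (M : Type u) [AddCommGroup M] [Module R M] (σ : Ordinal.{u}) :
    Cardinal :=
  let V : Submodule R M := ppow p σ ⊓ Submodule.torsionBy R M p
  let W : Submodule R V := (ppow p (σ + 1) ⊓ Submodule.torsionBy R M p).comap V.subtype
  Module.rank (R ⧸ Ideal.span {p})
    ((V ⧸ W) ⧸ (Ideal.span {p} • (⊤ : Submodule R (V ⧸ W))))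

/-- `û_p(σ, M) = min (u_p(σ, M), ω)`. -/
def uHat (p : R) (M : Type u) [AddCommGroup M] [Module R M] (σ : Ordinal.{u}) : Cardinal :=
  min (uCard p M σ) Cardinal.aleph0

/-- `û_p(∞, M) = min (dim (p^∞ M)[p], ω)`. -/
def uHatInf (p : R) (M : Type u) [AddCommGroup M] [Module R M] : Cardinal :=
  let V : Submodule R M := (⨅ α : Ordinal.{u}, ppow p α) ⊓ Submodule.torsionBy R M p
  min (Module.rank (R ⧸ Ideal.span {p})
    (V ⧸ (Ideal.span {p} • (⊤ : Submodule R V)))) Cardinal.aleph0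

end UlmW

open UlmW

/-- The ideal `(p) ⊆ ℤ` is prime. -/
instance zpSpanPrime (p : ℤ) [hp : Fact (Prime p)] : (Ideal.span {p} : Ideal ℤ).IsPrime :=
  (Ideal.span_singleton_prime hp.out.ne_zero).mpr hp.out

/-- `ℤ_(p)`, the integers localized at the prime `p`. -/
abbrev Zp (p : ℤ) [Fact (Prime p)] : Type :=
  Localization.AtPrime (Ideal.span {p} : Ideal ℤ)


universe u

open UlmW

/-!
Let `V = ⟨S ∩ X⟩`. As `y ∈ X` but `y ∉ V`, the decomposition property makes every `c • y` proper
with respect to `V`. Call `k` bad if some `s ∈ S` satisfies `|pᵏ y + s| > |pᵏ y|`. Two bad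
exponents `k < k'` with witnesses `s ≡ s' (mod V)` cannot exist: `(pᵏ - pᵏ') y + (s - s')` would
have height above `|pᵏ y|`, against properness with respect to `V`. Since `S/V` is a finitely
generated torsion `ℤ_(p)`-module it is finite, so only finitely many exponents are bad. Beyond
them `pⁿ y` is proper with respect to `S`, which is the height formula; a unit factor of `r`
changes no heights.
-/

namespace UlmW

section Height

variable {R : Type*} [CommRing R] {M : Type u} [AddCommGroup M] [Module R M] {p : R}

theorem ppow_zero (p : R) : ppow (M := M) p 0 = ⊤ := by
  rw [ppow, Ordinal.limitRecOn_zero]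

theorem ppow_add_one (p : R) (α : Ordinal.{u}) :
    ppow (M := M) p (α + 1) = (ppow p α).map (LinearMap.lsmul R M p) := by
  rw [ppow, Ordinal.limitRecOn_add_one]; rfl

theorem ppow_of_isSuccLimit (p : R) {α : Ordinal.{u}} (h : Order.IsSuccLimit α) :
    ppow (M := M) p α = ⨅ β : Set.Iio α, ppow p β.1 := by
  rw [ppow, Ordinal.limitRecOn_limit _ _ _ _ h]; rfl

theorem smul_mem_ppow_add_one {x : M} {α : Ordinal.{u}} (hx : x ∈ ppow p α) :
    p • x ∈ ppow p (α + 1) := by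
  rw [ppow_add_one]
  exact ⟨x, hx, rfl⟩

theorem ppow_add_one_le (p : R) (α : Ordinal.{u}) : ppow (M := M) p (α + 1) ≤ ppow p α := by
  rw [ppow_add_one]
  rintro _ ⟨x, hx, rfl⟩
  exact Submodule.smul_mem _ p hx

theorem ppow_antitone (p : R) : Antitone (ppow (M := M) p) := by
  intro α β h
  induction β using Ordinal.limitRecOn generalizing α with
  | zero => rw [nonpos_iff_eq_zero.mp h]
  | add_one γ ih =>
    rcases h.eq_or_lt with rfl | hlt
    · exact le_rfl
    · exact (ppow_add_one_le p γ).trans (ih (Order.lt_add_one_iff.mp hlt))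
  | limit γ hγ _ =>
    rcases h.eq_or_lt with rfl | hlt
    · exact le_rfl
    · rw [ppow_of_isSuccLimit p hγ]
      exact iInf_le _ (⟨α, hlt⟩ : Set.Iio γ)

theorem mem_ppow_of_forall_mem_ppow_add_one {x : M}
    (h : ∀ α : Ordinal.{u}, x ∈ ppow p α → x ∈ ppow p (α + 1)) (α : Ordinal.{u}) :
    x ∈ ppow p α := by
  induction α using Ordinal.limitRecOn with
  | zero => simp [ppow_zero]
  | add_one β ih => exact h β ih
  | limit β hβ ih =>
    rw [ppow_of_isSuccLimit p hβ, Submodule.mem_iInf]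
    exact fun γ => ih γ.1 γ.2

theorem coe_le_pheight_iff {x : M} {α : Ordinal.{u}} :
    (α : WithTop Ordinal.{u}) ≤ pheight p x ↔ x ∈ ppow p α := by
  by_cases hx : ∃ β : Ordinal.{u}, x ∈ ppow p β ∧ x ∉ ppow p (β + 1)
  · obtain ⟨hmem, hnot⟩ := hx.choose_spec
    rw [pheight, dif_pos hx, WithTop.coe_le_coe]
    refine ⟨fun h => ppow_antitone p h hmem, fun h => ?_⟩
    by_contra! hlt
    exact hnot (ppow_antitone p (Order.add_one_le_of_lt hlt) h)
  · push Not at hx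
    rw [pheight, dif_neg (by simpa using hx)]
    simpa using mem_ppow_of_forall_mem_ppow_add_one hx α

theorem pheight_le_pheight_of_forall_mem {x z : M}
    (h : ∀ α : Ordinal.{u}, x ∈ ppow p α → z ∈ ppow p α) : pheight p x ≤ pheight p z :=
  WithTop.forall_coe_le_iff_le.mp fun α hα =>
    coe_le_pheight_iff.mpr (h α (coe_le_pheight_iff.mp hα))

theorem pheight_zero : pheight p (0 : M) = ⊤ :=
  top_le_iff.mp <| WithTop.forall_coe_le_iff_le.mp fun _ _ =>
    coe_le_pheight_iff.mpr (Submodule.zero_mem _)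

theorem min_le_pheight_add (x z : M) : min (pheight p x) (pheight p z) ≤ pheight p (x + z) :=
  WithTop.forall_coe_le_iff_le.mp fun _ hα =>
    coe_le_pheight_iff.mpr <| Submodule.add_mem _ (coe_le_pheight_iff.mp (le_min_iff.mp hα).1)
      (coe_le_pheight_iff.mp (le_min_iff.mp hα).2)

theorem pheight_le_pheight_smul (c : R) (x : M) : pheight p x ≤ pheight p (c • x) :=
  pheight_le_pheight_of_forall_mem fun _ hx => Submodule.smul_mem _ c hx

theorem pheight_smul_of_isUnit {c : R} (hc : IsUnit c) (x : M) :
    pheight p (c • x) = pheight p x := by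
  refine le_antisymm ?_ (pheight_le_pheight_smul c x)
  simpa [smul_smul] using pheight_le_pheight_smul (p := p) hc.unit⁻¹.val (c • x)

theorem pheight_neg (x : M) : pheight p (-x) = pheight p x := by
  simpa using pheight_smul_of_isUnit (p := p) isUnit_one.neg x

theorem min_le_pheight_sub (x z : M) : min (pheight p x) (pheight p z) ≤ pheight p (x - z) := by
  simpa [sub_eq_add_neg, pheight_neg] using min_le_pheight_add (p := p) x (-z)

theorem pheight_sub_le_of_lt {x z : M} (h : pheight p x < pheight p z) :
    pheight p (x - z) ≤ pheight p x := by
  by_contra! hlt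
  simpa using (lt_min hlt h).trans_le (min_le_pheight_add (x - z) z)

theorem pheight_pow_smul_lt {x : M} {k k' : ℕ} (hk : k < k') (h : pheight p (p ^ k • x) ≠ ⊤) :
    pheight p (p ^ k • x) < pheight p (p ^ k' • x) := by
  obtain ⟨α, hα⟩ := WithTop.ne_top_iff_exists.mp h
  have hmem : p • p ^ k • x ∈ ppow p (α + 1) :=
    smul_mem_ppow_add_one (coe_le_pheight_iff.mp hα.le)
  have hpow : p ^ k' • x = p ^ (k' - (k + 1)) • p • p ^ k • x := by
    rw [smul_smul, smul_smul, mul_assoc, ← pow_succ', ← pow_add, Nat.sub_add_cancel hk]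
  rw [← hα]
  refine (WithTop.coe_lt_coe.mpr (Order.lt_add_one_iff.mpr le_rfl)).trans_le ?_
  rw [coe_le_pheight_iff, hpow]
  exact Submodule.smul_mem _ _ hmem

end Height

section Proper

variable {R : Type*} [CommRing R] {M : Type u} [AddCommGroup M] [Module R M] {p : R}
  {S : Submodule R M} {x : M}

theorem IsProper.pheight_add_eq_min (h : IsProper p S x) {s : M} (hs : s ∈ S) :
    pheight p (x + s) = min (pheight p x) (pheight p s) := by
  refine le_antisymm (le_min (h s hs) ?_) (min_le_pheight_add x s)
  simpa [min_eq_left (h s hs)] using min_le_pheight_sub (p := p) (x + s) x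

theorem IsProper.smul_of_isUnit (h : IsProper p S x) {c : R} (hc : IsUnit c) :
    IsProper p S (c • x) := by
  intro s hs
  have hs' : c • x + s = c • (x + hc.unit⁻¹.val • s) := by
    rw [smul_add, smul_smul, hc.mul_val_inv, one_smul]
  rw [hs', pheight_smul_of_isUnit hc, pheight_smul_of_isUnit hc]
  exact h _ (S.smul_mem _ hs)

end Proper

section BadExponents

variable {R : Type*} [CommRing R] {M : Type u} [AddCommGroup M] [Module R M] {p : R}
  {S V : Submodule R M} {y : M}

theorem pheight_pow_smul_add_le_of_lt (hy : ∀ c : R, IsProper p V (c • y)) {k k' : ℕ}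
    (hk : k < k') {s s' : M} (hss' : s - s' ∈ V)
    (hs : pheight p (p ^ k • y) < pheight p (p ^ k • y + s)) :
    pheight p (p ^ k' • y + s') ≤ pheight p (p ^ k' • y) := by
  by_contra! hs'
  have hkk' := pheight_pow_smul_lt hk hs.ne_top
  have hdiff : (p ^ k - p ^ k') • y + (s - s') = (p ^ k • y + s) - (p ^ k' • y + s') := by
    rw [sub_smul]; abel
  have hupper : pheight p ((p ^ k - p ^ k') • y + (s - s')) ≤ pheight p (p ^ k • y) :=
    (hy _ _ hss').trans (sub_smul (p ^ k) (p ^ k') y ▸ pheight_sub_le_of_lt hkk')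
  refine hupper.not_gt ?_
  rw [hdiff]
  exact (lt_min hs (hkk'.trans hs')).trans_le (min_le_pheight_sub _ _)

theorem finite_setOf_not_isProper_pow_smul [Finite (S ⧸ V.comap S.subtype)]
    (hy : ∀ c : R, IsProper p V (c • y)) : {k : ℕ | ¬ IsProper p S (p ^ k • y)}.Finite := by
  have hwit (k : {k : ℕ | ¬ IsProper p S (p ^ k • y)}) :
      ∃ s : S, pheight p (p ^ k.1 • y) < pheight p (p ^ k.1 • y + s) := by
    simpa [IsProper] using k.2
  choose s hs using hwit
  suffices hinj : Function.Injective fun k => Submodule.Quotient.mk (p := V.comap S.subtype) (s k)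
    from Set.finite_coe_iff.mp (Finite.of_injective _ hinj)
  intro k k' hkk'
  have hV : ((s k : M) - s k') ∈ V := by
    simpa using (Submodule.Quotient.eq _).mp hkk'
  rcases lt_trichotomy k.1 k'.1 with hlt | heq | hgt
  · exact absurd (pheight_pow_smul_add_le_of_lt hy hlt hV (hs k)) (hs k').not_ge
  · exact Subtype.ext heq
  · exact absurd (pheight_pow_smul_add_le_of_lt hy hgt (sub_mem_comm_iff.mp hV) (hs k'))
      (hs k).not_ge

end BadExponents

theorem IsDecompWrt.isProper_smul {R : Type*} [CommRing R] {M : Type u} [AddCommGroup M]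
    [Module R M] {p : R} {X T : Set M} (hX : IsDecompWrt p X) (hT : T ⊆ X) {y : M} (hy : y ∈ X)
    (hyT : y ∉ T) (c : R) : IsProper p (Submodule.span R T) (c • y) := by
  classical
  intro v hv
  obtain ⟨a, ha, rfl⟩ := Submodule.mem_span_set.mp hv
  have hya : y ∉ a.support := fun h => hyT (ha h)
  have hsum : ∑ x ∈ insert y a.support, Function.update a y c x • x =
      c • y + a.sum fun x r => r • x := by
    rw [Finset.sum_insert hya, Function.update_self, Finsupp.sum]
    congr 1
    refine Finset.sum_congr rfl fun x hx => ?_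
    rw [Function.update_of_ne (ne_of_mem_of_not_mem hx hya)]
  have hsupp : ↑(insert y a.support) ⊆ X := by
    rw [Finset.coe_insert]
    exact Set.insert_subset hy (ha.trans hT)
  rw [← hsum, hX.2.2 _ hsupp]
  exact (Finset.inf_le (Finset.mem_insert_self _ _)).trans_eq (by rw [Function.update_self])

end UlmW

theorem Module.finite_of_isTorsion {R : Type*} [CommRing R] [Nontrivial R] {M : Type*}
    [AddCommGroup M] [Module R M] [Module.Finite R M] (hM : Module.IsTorsion R M)
    (hR : ∀ I : Ideal R, I ≠ ⊥ → Finite (R ⧸ I)) :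
    Finite M := by
  obtain ⟨a, ha, ha0⟩ := Submodule.annihilator_top_inter_nonZeroDivisors hM
  have : Finite (R ⧸ Ideal.span {a}) :=
    hR _ (Ideal.span_singleton_eq_bot.not.mpr (nonZeroDivisors.ne_zero ha0))
  have htors : Module.IsTorsionBy R M a := fun x =>
    Submodule.mem_annihilator.mp ha x Submodule.mem_top
  let := htors.module
  have : Module.Finite (R ⧸ Ideal.span {a}) M := Module.Finite.of_restrictScalars_finite R _ M
  exact Module.finite_of_finite (R ⧸ Ideal.span {a})

namespace Zp

variable (p : ℤ) [Fact (Prime p)]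

instance : IsDiscreteValuationRing (Zp p) :=
  IsLocalization.AtPrime.isDiscreteValuationRing_of_dedekind_domain ℤ (P := Ideal.span {p})
    (Ideal.span_singleton_eq_bot.not.mpr (Fact.out : Prime p).ne_zero) (Zp p)

theorem maximalIdeal_eq_span : IsLocalRing.maximalIdeal (Zp p) = Ideal.span {(p : Zp p)} := by
  rw [← Localization.AtPrime.map_eq_maximalIdeal, Ideal.map_span, Set.image_singleton, eq_intCast]

theorem irreducible_p : Irreducible (p : Zp p) :=
  (IsDiscreteValuationRing.irreducible_iff_uniformizer _).mpr (maximalIdeal_eq_span p)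

theorem finite_quotient_of_ne_bot {I : Ideal (Zp p)} (hI : I ≠ ⊥) : Finite (Zp p ⧸ I) := by
  obtain ⟨n, rfl⟩ := IsDiscreteValuationRing.ideal_eq_span_pow_irreducible hI (irreducible_p p)
  have : NeZero (p ^ n) := ⟨pow_ne_zero _ (Fact.out : Prime p).ne_zero⟩
  have : (Ideal.span {p} : Ideal ℤ).IsMaximal :=
    PrincipalIdealRing.isMaximal_of_irreducible (Fact.out : Prime p).irreducible
  have e := (IsLocalization.AtPrime.equivQuotMaximalIdealPow (Ideal.span {p}) (Zp p) n).toEquiv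
  rw [Ideal.span_singleton_pow, maximalIdeal_eq_span, Ideal.span_singleton_pow] at e
  exact Finite.of_equiv _ e

end Zp

theorem statement_12 (p : ℤ) [Fact (Prime p)] {G : Type u} [AddCommGroup G]
    [Module (Zp p) G]
    (X : Set G) (hdec : IsDecompWrt (p : Zp p) X)
    (hbasis : ∀ g : G, ∃ a : Zp p, a ≠ 0 ∧ a • g ∈ Submodule.span (Zp p) X)
    (S : Submodule (Zp p) G) (hfg : S.FG)
    (hSX : S ⊓ Submodule.span (Zp p) X = Submodule.span (Zp p) ((S : Set G) ∩ X))
    (y : G) (hy : y ∈ X) (hyS : y ∉ S) :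
    ∃ n : ℕ, ∀ r : Zp p, ∀ s ∈ S,
      pheight (p : Zp p) ((r * (p : Zp p) ^ n) • y + s) =
        min (pheight (p : Zp p) ((r * (p : Zp p) ^ n) • y)) (pheight (p : Zp p) s) := by
  set V := Submodule.span (Zp p) ((S : Set G) ∩ X)
  have hVy : ∀ c : Zp p, IsProper (p : Zp p) V (c • y) :=
    hdec.isProper_smul Set.inter_subset_right hy fun h => hyS h.1
  have htors : Module.IsTorsion (Zp p) (S ⧸ V.comap S.subtype) := by
    intro x
    obtain ⟨⟨s, hs⟩, rfl⟩ := Submodule.Quotient.mk_surjective _ x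
    obtain ⟨a, ha0, ha⟩ := hbasis s
    refine ⟨⟨a, mem_nonZeroDivisors_of_ne_zero ha0⟩, ?_⟩
    rw [Submonoid.smul_def, ← Submodule.Quotient.mk_smul, Submodule.Quotient.mk_eq_zero]
    exact hSX ▸ ⟨S.smul_mem a hs, ha⟩
  have : Module.Finite (Zp p) S := Module.Finite.iff_fg.mpr hfg
  have : Finite (S ⧸ V.comap S.subtype) :=
    Module.finite_of_isTorsion htors fun _ => Zp.finite_quotient_of_ne_bot p
  obtain ⟨N, hN⟩ := (finite_setOf_not_isProper_pow_smul (S := S) hVy).bddAbove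
  refine ⟨N + 1, fun r s hs => ?_⟩
  rcases eq_or_ne r 0 with rfl | hr
  · simp [pheight_zero]
  obtain ⟨j, u, rfl⟩ := IsDiscreteValuationRing.eq_unit_mul_pow_irreducible hr (Zp.irreducible_p p)
  have hproper : IsProper (p : Zp p) S ((p : Zp p) ^ (j + (N + 1)) • y) := by
    by_contra h
    have := hN h
    omega
  rw [mul_assoc, ← pow_add, mul_smul]
  exact (hproper.smul_of_isUnit u.isUnit).pheight_add_eq_min hs
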